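/- Let n ≥ 2 and λ ∈ (0,1). There exist vectors ξ₀, ξ₁, ξ₂, ξ₃ ∈ ℝⁿ with ξ₀ + ξ₁ = ξ₂ + ξ₃, |ξ₀|² = 1/2, |ξ₁|² = 1/2, |ξ₂|² = (1 − λ²)², |ξ₃|² = λ², and the four vectors pairwise non-collinear. Moreover the direction ξ₃/|ξ₃| can be chosen independent of λ. -/

import Mathlib

/-!
Work in a real plane, identified with `ℂ`, with `ξ₃ = λ` on the real axis, and put `a = 1 - λ²`.
The free parameter is `s = |ξ₀ + ξ₁|²`. For `(a - λ)² < s < (a + λ)²` a triangle with sides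
`λ, a, √s` gives `ξ₂` with `S = ξ₂ + λ` of squared length `s`; for `s < 2` the two vectors of
squared length `1/2` summing to `S` are `S (1 ± τ i) / 2` with `s τ² = 2 - s`. Each possible
collinearity forces a polynomial equation in `s` that is not identically zero unless
`a = λ = 1/√2`, so some `s` in the interval avoids all of them.
-/

open Complex ComplexConjugate Polynomial

theorem Complex.nonempty_linearIsometry_of_two_le_finrank {F : Type*} [NormedAddCommGroup F]
    [InnerProductSpace ℝ F] [FiniteDimensional ℝ F] (h : 2 ≤ Module.finrank ℝ F) :
    Nonempty (ℂ →ₗᵢ[ℝ] F) := by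
  have he : Orthonormal ℝ (stdOrthonormalBasis ℝ F ∘ Fin.castLE h) :=
    (stdOrthonormalBasis ℝ F).orthonormal.comp _ (Fin.castLE_injective h)
  refine ⟨(basisOneI.constr ℝ (stdOrthonormalBasis ℝ F ∘ Fin.castLE h)).isometryOfOrthonormal
    (v := basisOneI) ?_ ?_⟩
  · rw [← toBasis_orthonormalBasisOneI, OrthonormalBasis.coe_toBasis]
    exact orthonormalBasisOneI.orthonormal
  · convert he using 1
    exact funext (basisOneI.constr_basis ℝ _)

theorem LinearIsometry.ne_smul_of_ne_smul {E F : Type*} [NormedAddCommGroup E]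
    [SeminormedAddCommGroup F] [NormedSpace ℝ E] [NormedSpace ℝ F] (φ : E →ₗᵢ[ℝ] F) {x y : E}
    (h : ∀ c : ℝ, x ≠ c • y) (c : ℝ) : φ x ≠ c • φ y := fun hxy =>
  h c (φ.injective (by rw [map_smul, hxy]))

theorem Complex.ne_real_smul_of_im_mul_conj_ne_zero {z w : ℂ} (h : (z * conj w).im ≠ 0)
    (c : ℝ) : z ≠ c • w := by
  rintro rfl
  apply h
  simp [mul_assoc, Complex.mul_conj]

theorem Complex.ne_real_smul_of_im_mul_conj_ne_zero_of_lt {ι : Type*} [LinearOrder ι]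
    {v : ι → ℂ} (h : ∀ i j, i < j → (v i * conj (v j)).im ≠ 0) (i j : ι) (hij : i ≠ j) (c : ℝ) :
    v i ≠ c • v j := by
  apply ne_real_smul_of_im_mul_conj_ne_zero
  rcases hij.lt_or_gt with hij | hji
  · exact h i j hij
  · rw [← conj_conj (v i), ← map_mul, conj_im, mul_comm, neg_ne_zero]
    exact h j i hji

theorem Complex.ne_real_smul_of_im_mul_conj_ne_zero₄ {z₀ z₁ z₂ z₃ : ℂ}
    (h₀₁ : (z₀ * conj z₁).im ≠ 0) (h₀₂ : (z₀ * conj z₂).im ≠ 0) (h₀₃ : (z₀ * conj z₃).im ≠ 0)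
    (h₁₂ : (z₁ * conj z₂).im ≠ 0) (h₁₃ : (z₁ * conj z₃).im ≠ 0) (h₂₃ : (z₂ * conj z₃).im ≠ 0) :
    ∀ i j : Fin 4, i ≠ j → ∀ c : ℝ, ![z₀, z₁, z₂, z₃] i ≠ c • ![z₀, z₁, z₂, z₃] j := by
  refine ne_real_smul_of_im_mul_conj_ne_zero_of_lt fun i j hij => ?_
  fin_cases i <;> fin_cases j <;> first | exact absurd hij (by decide) | assumption

theorem Polynomial.exists_mem_Ioo_eval_ne_zero {f : ℝ[X]} (hf : f ≠ 0) {l u : ℝ} (hlu : l < u) :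
    ∃ s ∈ Set.Ioo l u, f.eval s ≠ 0 := by
  by_contra! h
  exact hf (f.eq_zero_of_infinite_isRoot ((Set.Ioo_infinite hlu).mono h))

theorem Polynomial.C_mul_X_sq_sub_X_add_C_sq_ne_zero {α β : ℝ} (h : α ≠ 1 ∨ β ≠ 0) :
    C α * X ^ 2 - (X + C β) ^ 2 ≠ 0 := by
  intro h0
  have hβ : β = 0 := by simpa using congrArg (eval 0) h0
  have hα : α = 1 := by
    have := congrArg (eval 1) h0
    simp only [hβ, eval_sub, eval_mul, eval_pow, eval_add, eval_C, eval_X, eval_zero] at this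
    linarith
  exact h.elim (· hα) (· hβ)

theorem exists_fourWave_sq_norm_sum {a b : ℝ} (ha : 0 < a) (hb : 0 < b) (hab : (a - b) ^ 2 < 2)
    (hdeg : a ≠ b ∨ 2 * b ^ 2 ≠ 1) :
    ∃ s, (a - b) ^ 2 < s ∧ s < (a + b) ^ 2 ∧ s < 2 ∧
      2 * b ^ 2 * s ^ 2 ≠ (s + b ^ 2 - a ^ 2) ^ 2 ∧
      2 * a ^ 2 * s ^ 2 ≠ (s + a ^ 2 - b ^ 2) ^ 2 := by
  have hf : (C (2 * b ^ 2) * X ^ 2 - (X + C (b ^ 2 - a ^ 2)) ^ 2) *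
      (C (2 * a ^ 2) * X ^ 2 - (X + C (a ^ 2 - b ^ 2)) ^ 2) ≠ 0 := by
    by_cases h : a ^ 2 = b ^ 2
    · have h2 : 2 * b ^ 2 ≠ 1 :=
        hdeg.resolve_left fun hne => hne ((pow_left_inj₀ ha.le hb.le two_ne_zero).1 h)
      exact mul_ne_zero (C_mul_X_sq_sub_X_add_C_sq_ne_zero (.inl h2))
        (C_mul_X_sq_sub_X_add_C_sq_ne_zero (.inl (h ▸ h2)))
    · exact mul_ne_zero (C_mul_X_sq_sub_X_add_C_sq_ne_zero (.inr (sub_ne_zero.2 (Ne.symm h))))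
        (C_mul_X_sq_sub_X_add_C_sq_ne_zero (.inr (sub_ne_zero.2 h)))
  obtain ⟨s, ⟨hs_lo, hs_hi⟩, hs⟩ :=
    exists_mem_Ioo_eval_ne_zero hf (u := min ((a + b) ^ 2) 2)
      (lt_min (by nlinarith [mul_pos ha hb]) hab)
  simp only [eval_mul, eval_sub, eval_pow, eval_add, eval_C, eval_X, mul_ne_zero_iff,
    sub_ne_zero, ← add_sub_assoc] at hs
  exact ⟨s, hs_lo, hs_hi.trans_le (min_le_left _ _), hs_hi.trans_le (min_le_right _ _), hs⟩

theorem ne_mul_of_mul_sq_ne_mul_sq {s r τ u v : ℝ} (hτ : s * τ ^ 2 = r)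
    (h : s * u ^ 2 ≠ r * v ^ 2) : u ≠ τ * v := by
  rintro rfl
  exact h (by linear_combination v ^ 2 * hτ)

/-- Here `s = ‖z₀ + z₁‖²`; `hsb` keeps `z₀, z₁` off the line of `b`, and `hsa` off that of `z₂`. -/
theorem exists_complex_fourWave_of_sq_norm_sum {a b s : ℝ} (hb : 0 < b) (hs_lo : (a - b) ^ 2 < s)
    (hs_hi : s < (a + b) ^ 2) (hs2 : s < 2)
    (hsb : 2 * b ^ 2 * s ^ 2 ≠ (s + b ^ 2 - a ^ 2) ^ 2)
    (hsa : 2 * a ^ 2 * s ^ 2 ≠ (s + a ^ 2 - b ^ 2) ^ 2) :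
    ∃ z₀ z₁ z₂ : ℂ, z₀ + z₁ = z₂ + b ∧ ‖z₀‖ ^ 2 = 1 / 2 ∧ ‖z₁‖ ^ 2 = 1 / 2 ∧ ‖z₂‖ ^ 2 = a ^ 2 ∧
      ∀ i j : Fin 4, i ≠ j → ∀ c : ℝ, ![z₀, z₁, z₂, b] i ≠ c • ![z₀, z₁, z₂, b] j := by
  have hs : 0 < s := (sq_nonneg _).trans_lt hs_lo
  obtain ⟨p, hp⟩ : ∃ p, 2 * b * p = s + b ^ 2 - a ^ 2 :=
    ⟨(s + b ^ 2 - a ^ 2) / (2 * b), by field_simp⟩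
  have hq_pos : 0 < s - p ^ 2 := by
    have : 4 * b ^ 2 * (s - p ^ 2) = ((a + b) ^ 2 - s) * (s - (a - b) ^ 2) := by
      linear_combination (-(2 * b * p) - (s + b ^ 2 - a ^ 2)) * hp
    nlinarith [mul_pos (sub_pos.2 hs_hi) (sub_pos.2 hs_lo)]
  obtain ⟨q, hq0, hq⟩ : ∃ q : ℝ, 0 < q ∧ q ^ 2 = s - p ^ 2 :=
    ⟨√(s - p ^ 2), Real.sqrt_pos.2 hq_pos, Real.sq_sqrt hq_pos.le⟩
  obtain ⟨τ, hτ0, hτ⟩ : ∃ τ : ℝ, 0 < τ ∧ s * τ ^ 2 = 2 - s := by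
    have h : 0 < (2 - s) / s := div_pos (by linarith) hs
    exact ⟨√((2 - s) / s), Real.sqrt_pos.2 h, by rw [Real.sq_sqrt h.le]; field_simp⟩
  have hpq : s * q ^ 2 ≠ (2 - s) * p ^ 2 := by
    intro h
    apply hsb
    linear_combination
      2 * b ^ 2 * h - 2 * b ^ 2 * s * hq + (2 * b * p + s + b ^ 2 - a ^ 2) * hp
  have hrq : s * (b * q) ^ 2 ≠ (2 - s) * (s - b * p) ^ 2 := by
    intro h
    apply hsa
    linear_combination 2 * h - 2 * s * b ^ 2 * hq
      - (1 / 2) * (-2 * s * (b * p + (s + b ^ 2 - a ^ 2) / 2)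
        + 2 * (2 - s) * (2 * s - b * p - (s + b ^ 2 - a ^ 2) / 2)) * hp
  have hτ' : s * (-τ) ^ 2 = 2 - s := by rwa [neg_sq]
  have h03 : q ≠ τ * -p := ne_mul_of_mul_sq_ne_mul_sq hτ (by rwa [neg_sq])
  have h13 : q ≠ -τ * -p := ne_mul_of_mul_sq_ne_mul_sq hτ' (by rwa [neg_sq])
  have h02 : b * q ≠ τ * (s - b * p) := ne_mul_of_mul_sq_ne_mul_sq hτ hrq
  have h12 : b * q ≠ -τ * (s - b * p) := ne_mul_of_mul_sq_ne_mul_sq hτ' hrq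
  -- `z₀, z₁ = (p + q i)(1 ± τ i) / 2`
  refine ⟨⟨(p - q * τ) / 2, (q + p * τ) / 2⟩, ⟨(p + q * τ) / 2, (q - p * τ) / 2⟩, ⟨p - b, q⟩,
    ?_, ?_, ?_, ?_, ?_⟩
  · apply Complex.ext <;> simp only [add_re, add_im, ofReal_re, ofReal_im] <;> ring
  · rw [Complex.sq_norm, Complex.normSq_mk]
    linear_combination (1 + τ ^ 2) / 4 * hq + hτ / 4
  · rw [Complex.sq_norm, Complex.normSq_mk]
    linear_combination (1 + τ ^ 2) / 4 * hq + hτ / 4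
  · rw [Complex.sq_norm, Complex.normSq_mk]
    linear_combination hq - hp
  · refine ne_real_smul_of_im_mul_conj_ne_zero₄ ?_ ?_ ?_ ?_ ?_ ?_ <;>
      simp only [mul_im, conj_re, conj_im, ofReal_re, ofReal_im, neg_zero, mul_zero, zero_add]
    · have : (p - q * τ) / 2 * -((q - p * τ) / 2) + (q + p * τ) / 2 * ((p + q * τ) / 2)
          = τ * s / 2 := by linear_combination τ / 2 * hq
      rw [this]
      positivity
    · intro h
      exact h02 (by linear_combination -2 * h + τ * hq)
    · exact mul_ne_zero (div_ne_zero (fun h => h03 (by linear_combination h)) two_ne_zero) hb.ne'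
    · intro h
      exact h12 (by linear_combination -2 * h - τ * hq)
    · exact mul_ne_zero (div_ne_zero (fun h => h13 (by linear_combination h)) two_ne_zero) hb.ne'
    · exact mul_ne_zero hq0.ne' hb.ne'

theorem exists_complex_fourWave {a b : ℝ} (ha : 0 < a) (hb : 0 < b) (hab : (a - b) ^ 2 < 2)
    (hdeg : a ≠ b ∨ 2 * b ^ 2 ≠ 1) :
    ∃ z₀ z₁ z₂ : ℂ, z₀ + z₁ = z₂ + b ∧ ‖z₀‖ ^ 2 = 1 / 2 ∧ ‖z₁‖ ^ 2 = 1 / 2 ∧ ‖z₂‖ ^ 2 = a ^ 2 ∧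
      ∀ i j : Fin 4, i ≠ j → ∀ c : ℝ, ![z₀, z₁, z₂, b] i ≠ c • ![z₀, z₁, z₂, b] j := by
  obtain ⟨s, hs_lo, hs_hi, hs2, hsb, hsa⟩ := exists_fourWave_sq_norm_sum ha hb hab hdeg
  exact exists_complex_fourWave_of_sq_norm_sum hb hs_lo hs_hi hs2 hsb hsa

/-- four-wave direction decomposition ξ₀ + ξ₁ = ξ₂ + ξ₃ with
|ξ₀|² = |ξ₁|² = 1/2, |ξ₂|² = (1-λ²)², |ξ₃|² = λ², pairwise non-collinear,
and the direction of ξ₃ independent of λ. -/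
theorem stmt_1 (n : ℕ) (hn : 2 ≤ n) :
    ∃ ξhat : EuclideanSpace ℝ (Fin n), ‖ξhat‖ = 1 ∧
      ∀ lam : ℝ, lam ∈ Set.Ioo (0:ℝ) 1 →
        ∃ ξ0 ξ1 ξ2 ξ3 : EuclideanSpace ℝ (Fin n),
          ξ0 + ξ1 = ξ2 + ξ3 ∧
          ‖ξ0‖ ^ 2 = 1 / 2 ∧ ‖ξ1‖ ^ 2 = 1 / 2 ∧
          ‖ξ2‖ ^ 2 = (1 - lam ^ 2) ^ 2 ∧ ‖ξ3‖ ^ 2 = lam ^ 2 ∧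
          ξ3 = lam • ξhat ∧
          (∀ i j : Fin 4, i ≠ j → ∀ c : ℝ,
            ![ξ0, ξ1, ξ2, ξ3] i ≠ c • ![ξ0, ξ1, ξ2, ξ3] j) := by
  obtain ⟨φ⟩ := nonempty_linearIsometry_of_two_le_finrank
    (F := EuclideanSpace ℝ (Fin n)) (by rwa [finrank_euclideanSpace_fin])
  refine ⟨φ 1, by simp, fun lam ⟨hl0, hl1⟩ => ?_⟩
  obtain ⟨z₀, z₁, z₂, hsum, h₀, h₁, h₂, hz⟩ := exists_complex_fourWave (a := 1 - lam ^ 2)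
    (b := lam) (by nlinarith) hl0 (by nlinarith [mul_pos hl0 (sub_pos.2 hl1)])
    (by by_contra! h; nlinarith [h.1, h.2])
  have hφ : ![φ z₀, φ z₁, φ z₂, φ lam] = φ ∘ ![z₀, z₁, z₂, (lam : ℂ)] := by
    funext i; fin_cases i <;> rfl
  refine ⟨φ z₀, φ z₁, φ z₂, φ lam, by rw [← map_add, ← map_add, hsum], by rwa [φ.norm_map],
    by rwa [φ.norm_map], by rwa [φ.norm_map], by simp [φ.norm_map], ?_, ?_⟩
  · rw [← map_smul, real_smul, mul_one]
  · rw [hφ]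
    exact fun i j hij c => φ.ne_smul_of_ne_smul (hz i j hij) c
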